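/- arXiv:2201.12565 — 3 statements merged into one kernel-verified Lean document; each statement's English description precedes it below -/
import Mathlib

section
/- Fix constants c_k > 0 for k = 1,…,K and T > 0. The maximum of Σ_{k=1}^K τ_k log2(1 + c_k/τ_k) over τ_k ≥ 0 with Σ_k τ_k ≤ T is attained at a point where every τ_k > 0 and all ratios c_k/τ_k are equal, i.e., τ_k* = T·c_k/(Σ_j c_j), and the optimal value equals T·log2(1 + (Σ_k c_k)/T). -/
/-!
The map `(τ, c) ↦ τ log (1 + c / τ)` is the perspective of `log (1 + ·)`, hence jointly concave,
and it lies below its tangent plane at any point of ratio `c / τ = a - 1`; this is `log x ≤ x - 1`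
applied to `x = (1 + c / τ) / a`. Summing the tangent bounds at the common ratio `S / T`,
`S = ∑ c k`, the coefficient of `∑ τ k` is `log a - 1 + a⁻¹ ≥ 0`, so the budget `∑ τ k ≤ T`
bounds the sum by `T log (1 + S / T)`. The allocation `τ k = T c k / S` has exactly this common
ratio and spends the whole budget, so it attains the bound.
-/

open Real Finset

theorem mul_log_one_add_div_le_tangent {a c τ : ℝ} (ha : 0 < a) (hc : 0 ≤ c) (hτ : 0 ≤ τ) :
    τ * log (1 + c / τ) ≤ τ * (log a - 1) + (τ + c) / a := by
  rcases hτ.eq_or_lt with rfl | hτ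
  · simpa using div_nonneg hc ha.le
  have hlog := log_le_sub_one_of_pos (x := (1 + c / τ) / a) (by positivity)
  rw [log_div (by positivity) ha.ne'] at hlog
  have hscaled : τ * ((1 + c / τ) / a - 1) = (τ + c) / a - τ := by
    field_simp
  linarith [mul_le_mul_of_nonneg_left hlog hτ.le]

theorem sum_mul_log_one_add_div_le {ι : Type*} (s : Finset ι) {c τ : ι → ℝ} {T : ℝ}
    (hc : ∀ k ∈ s, 0 ≤ c k) (hτ : ∀ k ∈ s, 0 ≤ τ k) (hsum : ∑ k ∈ s, τ k ≤ T) (hT : 0 < T) :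
    ∑ k ∈ s, τ k * log (1 + c k / τ k) ≤ T * log (1 + (∑ k ∈ s, c k) / T) := by
  set S := ∑ k ∈ s, c k
  have hS : 0 ≤ S := sum_nonneg hc
  set a := 1 + S / T with ha_def
  have ha : 0 < a := by positivity
  calc ∑ k ∈ s, τ k * log (1 + c k / τ k)
      ≤ ∑ k ∈ s, (τ k * (log a - 1) + (τ k + c k) / a) :=
        sum_le_sum fun k hk => mul_log_one_add_div_le_tangent ha (hc k hk) (hτ k hk)
    _ = (∑ k ∈ s, τ k) * (log a - 1 + a⁻¹) + S / a := by
        rw [sum_add_distrib, ← sum_mul, ← sum_div, sum_add_distrib]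
        ring
    _ ≤ T * (log a - 1 + a⁻¹) + S / a := by
        gcongr
        linarith [one_sub_inv_le_log_of_pos ha]
    _ = T * log a := by
        have hbudget : (T + S) / a = T := by
          have : T + S ≠ 0 := by positivity
          rw [ha_def]
          field_simp
        linear_combination hbudget

theorem sum_mul_logb_one_add_div_le {ι : Type*} (s : Finset ι) {b : ℝ} (hb : 1 < b)
    {c τ : ι → ℝ} {T : ℝ} (hc : ∀ k ∈ s, 0 ≤ c k) (hτ : ∀ k ∈ s, 0 ≤ τ k)
    (hsum : ∑ k ∈ s, τ k ≤ T) (hT : 0 < T) :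
    ∑ k ∈ s, τ k * logb b (1 + c k / τ k) ≤ T * logb b (1 + (∑ k ∈ s, c k) / T) := by
  simp only [logb, mul_div_assoc']
  rw [← sum_div, div_le_div_iff_of_pos_right (log_pos hb)]
  exact sum_mul_log_one_add_div_le s hc hτ hsum hT

/-- Equal-SNR optimal time allocation: the maximum of Σ τ_k log2(1 + c_k/τ_k) subject to
τ_k ≥ 0, Σ τ_k ≤ T is attained at τ_k* = T c_k / Σ c_j (all positive, all ratios equal),
with optimal value T log2(1 + (Σ c_k)/T). -/
theorem stmt_2 (K : ℕ) (c : Fin K → ℝ) (T : ℝ) (hc : ∀ k, 0 < c k) (hT : 0 < T) :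
    (∀ τ : Fin K → ℝ, (∀ k, 0 ≤ τ k) → (∑ k, τ k) ≤ T →
      ∑ k, τ k * Real.logb 2 (1 + c k / τ k) ≤ T * Real.logb 2 (1 + (∑ k, c k) / T)) ∧
    (∀ k, 0 < T * c k / (∑ j, c j)) ∧
    (∑ k, T * c k / (∑ j, c j)) ≤ T ∧
    (∑ k, (T * c k / (∑ j, c j)) * Real.logb 2 (1 + c k / (T * c k / (∑ j, c j))))
      = T * Real.logb 2 (1 + (∑ k, c k) / T) ∧
    (∀ k j, c k / (T * c k / (∑ i, c i)) = c j / (T * c j / (∑ i, c i))) := by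
  refine ⟨fun τ hτ hsum => sum_mul_logb_one_add_div_le univ one_lt_two
    (fun k _ => (hc k).le) (fun k _ => hτ k) hsum hT, ?_⟩
  rcases isEmpty_or_nonempty (Fin K) with hK | hK
  · simp [hT.le]
  have hS : 0 < ∑ j, c j := sum_pos (fun j _ => hc j) univ_nonempty
  have hratio (k : Fin K) : c k / (T * c k / ∑ j, c j) = (∑ j, c j) / T := by
    have := (hc k).ne'
    field_simp
  have hbudget : ∑ k, T * c k / ∑ j, c j = T := by
    rw [← sum_div, ← mul_sum, mul_div_cancel_right₀ _ hS.ne']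
  refine ⟨fun k => div_pos (mul_pos hT (hc k)) hS, hbudget.le, ?_,
    fun k j => by rw [hratio, hratio]⟩
  simp_rw [hratio, ← sum_mul, hbudget]
end

section
/- NOMA dominates single-beamforming TDMA: let g_k ≥ 0 (effective channel gains), σ̃² > 0 (effective noise), E_k > 0, and T > 0. Then sup over (τ_k ≥ 0 with Σ τ_k ≤ T, and e_k ≤ E_k) of Σ_k τ_k log2(1 + e_k g_k/(τ_k σ̃²)) equals T·log2(1 + Σ_k E_k g_k/(T σ̃²)), which is the NOMA throughput with all devices using their full energy over the whole horizon T. -/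
/-!
The map `(τ, c) ↦ τ * log (1 + c / τ)` is the perspective of the concave function
`c ↦ log (1 + c)`, hence superadditive: the tangent bound `log x ≤ log a + x / a - 1` at
`a = 1 + (∑ c) / (∑ τ)` gives `∑ τₖ log (1 + cₖ / τₖ) ≤ (∑ τ) log (1 + (∑ c) / (∑ τ))`.
The right-hand side grows with `∑ τ` and `∑ c`, so TDMA is bounded by the NOMA rate, and the bound
is attained when every ratio `cₖ / τₖ` is the same, i.e. for `τₖ ∝ Eₖ gₖ`.
-/

open Real Finset

namespace Real

theorem log_le_log_add_div_sub_one {x a : ℝ} (hx : 0 < x) (ha : 0 < a) :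
    log x ≤ log a + x / a - 1 := by
  have h := log_le_sub_one_of_pos (div_pos hx ha)
  rw [log_div hx.ne' ha.ne'] at h
  linarith

theorem mul_log_one_add_div_le {τ c a : ℝ} (hτ : 0 ≤ τ) (hc : 0 ≤ c) (ha : 0 < a) :
    τ * log (1 + c / τ) ≤ τ * log a + (τ + c) / a - τ := by
  rcases hτ.eq_or_lt with rfl | hτ
  · simpa using div_nonneg hc ha.le
  · have hx : 0 < 1 + c / τ := by positivity
    have h := mul_le_mul_of_nonneg_left (log_le_log_add_div_sub_one hx ha) hτ.le
    have hτc : τ * (1 + c / τ) = τ + c := by field_simp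
    calc τ * log (1 + c / τ) ≤ τ * (log a + (1 + c / τ) / a - 1) := h
      _ = τ * log a + τ * (1 + c / τ) / a - τ := by ring
      _ = τ * log a + (τ + c) / a - τ := by rw [hτc]

theorem sum_mul_log_one_add_div_le {ι : Type*} (s : Finset ι) {τ c : ι → ℝ}
    (hτ : ∀ i ∈ s, 0 ≤ τ i) (hc : ∀ i ∈ s, 0 ≤ c i) :
    ∑ i ∈ s, τ i * log (1 + c i / τ i) ≤
      (∑ i ∈ s, τ i) * log (1 + (∑ i ∈ s, c i) / ∑ i ∈ s, τ i) := by
  set S := ∑ i ∈ s, τ i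
  set C := ∑ i ∈ s, c i
  have hS0 : 0 ≤ S := sum_nonneg hτ
  have hC0 : 0 ≤ C := sum_nonneg hc
  rcases hS0.eq_or_lt with hS | hS
  · have hτ0 : ∀ i ∈ s, τ i = 0 := (sum_eq_zero_iff_of_nonneg hτ).mp hS.symm
    rw [sum_eq_zero fun i hi => by simp [hτ0 i hi], ← hS, zero_mul]
  · have ha : 0 < 1 + C / S := by positivity
    have hSC : (S + C) / (1 + C / S) = S := by
      rw [one_add_div hS.ne', div_div_eq_mul_div, mul_div_cancel_left₀ _ (by positivity)]
    calc ∑ i ∈ s, τ i * log (1 + c i / τ i)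
        ≤ ∑ i ∈ s, (τ i * log (1 + C / S) + (τ i + c i) / (1 + C / S) - τ i) :=
          sum_le_sum fun i hi => mul_log_one_add_div_le (hτ i hi) (hc i hi) ha
      _ = S * log (1 + C / S) + (S + C) / (1 + C / S) - S := by
          rw [sum_sub_distrib, sum_add_distrib, ← sum_mul, ← sum_div, sum_add_distrib]
      _ = S * log (1 + C / S) := by rw [hSC]; ring

/-- Monotonicity is superadditivity applied to the split `T = S + (T - S)` with nothing sent
in the second slot. -/
theorem mul_log_one_add_div_le_of_le {S T c : ℝ} (hS : 0 ≤ S) (hST : S ≤ T) (hc : 0 ≤ c) :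
    S * log (1 + c / S) ≤ T * log (1 + c / T) := by
  have h := sum_mul_log_one_add_div_le (univ : Finset (Fin 2)) (τ := ![S, T - S]) (c := ![c, 0])
    (by simp [Fin.forall_fin_two, hS, hST]) (by simp [Fin.forall_fin_two, hc])
  simpa [Fin.sum_univ_two] using h

theorem sum_mul_log_one_add_div_le_of_sum_le {ι : Type*} (s : Finset ι) {τ c : ι → ℝ}
    {T C : ℝ} (hτ : ∀ i ∈ s, 0 ≤ τ i) (hc : ∀ i ∈ s, 0 ≤ c i)
    (hτT : ∑ i ∈ s, τ i ≤ T) (hcC : ∑ i ∈ s, c i ≤ C) :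
    ∑ i ∈ s, τ i * log (1 + c i / τ i) ≤ T * log (1 + C / T) := by
  have hT : 0 ≤ T := (sum_nonneg hτ).trans hτT
  calc ∑ i ∈ s, τ i * log (1 + c i / τ i)
      ≤ (∑ i ∈ s, τ i) * log (1 + (∑ i ∈ s, c i) / ∑ i ∈ s, τ i) :=
        sum_mul_log_one_add_div_le s hτ hc
    _ ≤ T * log (1 + (∑ i ∈ s, c i) / T) :=
        mul_log_one_add_div_le_of_le (sum_nonneg hτ) hτT (sum_nonneg hc)
    _ ≤ T * log (1 + C / T) := by
        have : 0 < 1 + (∑ i ∈ s, c i) / T := by have := sum_nonneg hc; positivity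
        gcongr

end Real

section ProportionalSplit

variable {ι : Type*} [Fintype ι]

/-- All shares are `0` when `∑ c = 0`, by the convention `x / 0 = 0`. -/
noncomputable def proportionalSplit (T : ℝ) (c : ι → ℝ) (i : ι) : ℝ :=
  T * c i / ∑ j, c j

theorem proportionalSplit_nonneg {T : ℝ} {c : ι → ℝ} (hT : 0 ≤ T) (hc : ∀ i, 0 ≤ c i) (i : ι) :
    0 ≤ proportionalSplit T c i :=
  div_nonneg (mul_nonneg hT (hc i)) (sum_nonneg fun j _ => hc j)

theorem sum_proportionalSplit_le {T : ℝ} (hT : 0 ≤ T) (c : ι → ℝ) :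
    ∑ i, proportionalSplit T c i ≤ T := by
  simp only [proportionalSplit, ← sum_div, ← mul_sum]
  rcases eq_or_ne (∑ j, c j) 0 with hC | hC
  · simp [hC, hT]
  · rw [mul_div_cancel_right₀ _ hC]

theorem sum_proportionalSplit_mul_log (T : ℝ) (c : ι → ℝ) :
    ∑ i, proportionalSplit T c i * log (1 + c i / proportionalSplit T c i) =
      T * log (1 + (∑ i, c i) / T) := by
  set C := ∑ i, c i with hC_def
  have hterm : ∀ i, proportionalSplit T c i * log (1 + c i / proportionalSplit T c i) =
      proportionalSplit T c i * log (1 + C / T) := by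
    intro i
    rcases eq_or_ne (proportionalSplit T c i) 0 with h | h
    · simp [h]
    · have hT : T ≠ 0 := by rintro rfl; simp [proportionalSplit] at h
      have hci : c i ≠ 0 := by rintro hci; simp [proportionalSplit, hci] at h
      have hC : C ≠ 0 := by rintro hC; simp [proportionalSplit, C, hC] at h
      congr 3
      simp only [proportionalSplit, ← hC_def]
      field_simp
  rw [sum_congr rfl fun i _ => hterm i, ← sum_mul]
  simp only [proportionalSplit, ← sum_div, ← mul_sum, ← hC_def]
  rcases eq_or_ne C 0 with hC | hC
  · simp [hC]
  · rw [mul_div_cancel_right₀ _ hC]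

end ProportionalSplit

/-- Proposition 1 (relaxed setting): with a single common beamforming vector, the supremum
of the TDMA sum throughput Σ τ_k log2(1 + e_k g_k/(τ_k σ̃²)) over τ_k ≥ 0, Σ τ_k ≤ T,
0 ≤ e_k ≤ E_k, is exactly the NOMA value T log2(1 + Σ E_k g_k/(T σ̃²)), and it is attained. -/
theorem stmt_9 (K : ℕ) (g E : Fin K → ℝ) (σsq T : ℝ)
    (hg : ∀ k, 0 ≤ g k) (hE : ∀ k, 0 < E k) (hσ : 0 < σsq) (hT : 0 < T) :
    IsGreatest
      {R : ℝ | ∃ τ e : Fin K → ℝ,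
        (∀ k, 0 ≤ τ k) ∧ (∑ k, τ k) ≤ T ∧ (∀ k, 0 ≤ e k ∧ e k ≤ E k) ∧
        R = ∑ k, τ k * Real.logb 2 (1 + e k * g k / (τ k * σsq))}
      (T * Real.logb 2 (1 + (∑ k, E k * g k) / (T * σsq))) := by
  have hsnr : ∀ (τ e : Fin K → ℝ) k, e k * g k / (τ k * σsq) = (e k * g k / σsq) / τ k :=
    fun _ _ _ => div_mul_eq_div_div_swap _ _ _
  have hlogb : ∀ (τ x : Fin K → ℝ), ∑ k, τ k * logb 2 (x k) = (∑ k, τ k * log (x k)) / log 2 := by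
    intro τ x
    simp only [logb, mul_div_assoc', sum_div]
  rw [div_mul_eq_div_div_swap, sum_div, logb, mul_div_assoc']
  constructor
  · set c : Fin K → ℝ := fun k => E k * g k / σsq
    refine ⟨proportionalSplit T c, E, proportionalSplit_nonneg hT.le
      (fun k => div_nonneg (mul_nonneg (hE k).le (hg k)) hσ.le), sum_proportionalSplit_le hT.le c,
      fun k => ⟨(hE k).le, le_rfl⟩, ?_⟩
    simp only [hsnr, hlogb]
    rw [sum_proportionalSplit_mul_log]
  · rintro R ⟨τ, e, hτ, hτT, he, rfl⟩
    simp only [hsnr, hlogb]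
    gcongr
    exact sum_mul_log_one_add_div_le_of_sum_le univ (fun k _ => hτ k)
      (fun k _ => div_nonneg (mul_nonneg (he k).1 (hg k)) hσ.le) hτT
      (sum_le_sum fun k _ => by gcongr; exacts [hg k, (he k).2])
end

section
/- Strict improvement when SNRs differ: with g_k ≥ 0, σ̃² > 0, and τ_k > 0, e_k ≥ 0 for k = 1,…,K, if there exist indices k ≠ j with e_k g_k/τ_k ≠ e_j g_j/τ_j, then Σ_k τ_k log2(1 + e_k g_k/(τ_k σ̃²)) < (Σ_k τ_k)·log2(1 + Σ_k e_k g_k/((Σ_k τ_k)·σ̃²)). -/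
/-!
Divide by the total time `S = ∑ τ_k`: the TDMA rate is then a convex combination, with weights
`τ_k / S`, of `log₂ (1 + x_k)` at the per-slot SNRs `x_k`, while the NOMA rate is `log₂ (1 + ·)`
at the same convex combination of the `x_k`. Since `x ↦ log₂ (1 + x)` is strictly concave and
two of the `x_k` differ, strict Jensen gives the claim.
-/

open Real Finset

theorem Real.strictConcaveOn_logb_Ioi {b : ℝ} (hb : 1 < b) :
    StrictConcaveOn ℝ (Set.Ioi 0) (logb b) := by
  refine ⟨convex_Ioi 0, fun x hx y hy hxy a c ha hc hac => ?_⟩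
  have hlog := strictConcaveOn_log_Ioi.2 hx hy hxy ha hc hac
  simp only [smul_eq_mul, logb] at hlog ⊢
  calc a * (log x / log b) + c * (log y / log b) = (a * log x + c * log y) / log b := by ring
    _ < log (a * x + c * y) / log b := div_lt_div_of_pos_right hlog (log_pos hb)

theorem Real.strictConcaveOn_logb_one_add {b : ℝ} (hb : 1 < b) :
    StrictConcaveOn ℝ (Set.Ioi (-1)) (fun x => logb b (1 + x)) := by
  have h := (strictConcaveOn_logb_Ioi hb).translate_right 1
  have hdom : (fun z : ℝ => 1 + z) ⁻¹' Set.Ioi 0 = Set.Ioi (-1) := by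
    ext z; simp only [Set.mem_preimage, Set.mem_Ioi]; constructor <;> intro <;> linarith
  rwa [hdom] at h

theorem StrictConcaveOn.sum_mul_lt_sum_mul_map_div_sum {ι : Type*} {s : Finset ι} {D : Set ℝ}
    {f : ℝ → ℝ} (hf : StrictConcaveOn ℝ D f) {τ x : ι → ℝ} (hτ : ∀ i ∈ s, 0 < τ i)
    (hx : ∀ i ∈ s, x i ∈ D) (hne : ∃ j ∈ s, ∃ k ∈ s, x j ≠ x k) :
    ∑ i ∈ s, τ i * f (x i) < (∑ i ∈ s, τ i) * f ((∑ i ∈ s, τ i * x i) / ∑ i ∈ s, τ i) := by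
  have hS : 0 < ∑ i ∈ s, τ i := by
    obtain ⟨j, hj, -⟩ := hne
    exact sum_pos hτ ⟨j, hj⟩
  have hw : ∑ i ∈ s, τ i / ∑ i ∈ s, τ i = 1 := by rw [← sum_div, div_self hS.ne']
  have hjensen := hf.lt_map_sum (fun i hi => div_pos (hτ i hi) hS) hw hx hne
  simp only [smul_eq_mul, div_mul_eq_mul_div, ← sum_div] at hjensen
  rwa [div_lt_iff₀' hS] at hjensen

/-- Strict Jensen improvement: if two devices have different per-slot SNRs
e_k g_k/τ_k ≠ e_j g_j/τ_j, then the aggregated (NOMA) throughput strictly exceeds the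
TDMA sum throughput. -/
theorem stmt_10 (K : ℕ) (g e τ : Fin K → ℝ) (σsq : ℝ)
    (hg : ∀ k, 0 ≤ g k) (he : ∀ k, 0 ≤ e k) (hτ : ∀ k, 0 < τ k) (hσ : 0 < σsq)
    (hne : ∃ k j, k ≠ j ∧ e k * g k / τ k ≠ e j * g j / τ j) :
    ∑ k, τ k * Real.logb 2 (1 + e k * g k / (τ k * σsq)) <
      (∑ k, τ k) * Real.logb 2 (1 + (∑ k, e k * g k) / ((∑ k, τ k) * σsq)) := by
  set snr : Fin K → ℝ := fun k => e k * g k / (τ k * σsq)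
  have hsnr : ∀ k ∈ univ, snr k ∈ Set.Ioi (-1) := fun k _ =>
    neg_one_lt_zero.trans_le <| div_nonneg (mul_nonneg (he k) (hg k)) (mul_nonneg (hτ k).le hσ.le)
  have hsnr_ne : ∃ k ∈ univ, ∃ j ∈ univ, snr k ≠ snr j := by
    obtain ⟨k, j, -, hkj⟩ := hne
    refine ⟨k, mem_univ k, j, mem_univ j, fun h => hkj ?_⟩
    simpa only [snr, ← div_div, div_left_inj' hσ.ne'] using h
  have hmean : (∑ k, τ k * snr k) / ∑ k, τ k = (∑ k, e k * g k) / ((∑ k, τ k) * σsq) := by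
    have hτsnr : ∀ k, τ k * snr k = e k * g k / σsq := fun k => by
      simp only [snr]; field_simp [(hτ k).ne']
    rw [sum_congr rfl fun k _ => hτsnr k, ← sum_div, div_div, mul_comm σsq]
  have hjensen := (strictConcaveOn_logb_one_add one_lt_two).sum_mul_lt_sum_mul_map_div_sum
    (fun k _ => hτ k) hsnr hsnr_ne
  rwa [hmean] at hjensen
end
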